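/- arXiv:2604.10921 — 2 statements merged into one kernel-verified Lean document; each statement's English description precedes it below -/
import Mathlib

section
/- Let q ∈ (0,1], ε ∈ [0,1], F : ℝ^{2d} → ℂ and ψ : ℝ^d → ℂ measurable, Q(j) = j + [0,1]^d, Q₂(ι) = ι + [−2,2]^d, and Ω₁, Ω₂ ⊆ ℤ^d. Then Σ_{ι∈Ω₁} sup_{j∈ℤ^d} ( Σ_{κ∈Ω₂} ess sup_{(x,ξ,η)∈Q(j)×Q(ι)×Q(κ)} |F(x, ξ−εη) ψ(η)| )^q ≤ Σ_{κ∈Ω₂} ( Σ_{ι∈Ω₁} ‖F‖_{L^∞(ℝ^d × Q₂(ι − ⌊εκ⌋))}^q ) ‖ψ‖_{L^∞(Q(κ))}^q, where ⌊x⌋ denotes the componentwise integer part. -/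
/-! If `ξ ∈ Q(ι)` and `η ∈ Q(κ)` then `ξ - εη ∈ Q₂(ι - ⌊εκ⌋)`. The maps `(x, ξ, η) ↦ (x, ξ - εη)`
and `(x, ξ, η) ↦ η` pull null sets back to null sets, so on `Q(j) × Q(ι) × Q(κ)` the essential
supremum of `|F(x, ξ - εη) ψ(η)|` is at most `‖F‖_{L^∞(ℝ^d × Q₂(ι - ⌊εκ⌋))} ‖ψ‖_{L^∞(Q(κ))}`,
uniformly in `j`. Subadditivity of `t ↦ t^q` for `q ≤ 1` moves the power inside the `κ`-sum,
and exchanging the `ι`- and `κ`-sums gives the bound. -/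

open MeasureTheory
open scoped ENNReal

namespace Stmt9

variable (d : ℕ)

/-- `x ∈ Q(j) = j + [0,1]^d`. -/
def inQ (j : Fin d → ℤ) (x : Fin d → ℝ) : Prop :=
  ∀ i, (j i : ℝ) ≤ x i ∧ x i ≤ (j i : ℝ) + 1

/-- `x ∈ Q₂(ι) = ι + [-2,2]^d`. -/
def inQ2 (ι : Fin d → ℤ) (x : Fin d → ℝ) : Prop :=
  ∀ i, (ι i : ℝ) - 2 ≤ x i ∧ x i ≤ (ι i : ℝ) + 2

/-- Componentwise integer part of `ε·κ`. -/
noncomputable def epsFloor (ε : ℝ) (κ : Fin d → ℤ) : Fin d → ℤ := fun i => ⌊ε * (κ i : ℝ)⌋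

theorem rpow_tsum_le_tsum_rpow {α : Type*} (f : α → ℝ≥0∞) {q : ℝ} (hq0 : 0 < q) (hq1 : q ≤ 1) :
    (∑' a, f a) ^ q ≤ ∑' a, f a ^ q := by
  have h_sum (s : Finset α) : (∑ a ∈ s, f a) ^ q ≤ ∑ a ∈ s, f a ^ q := by
    classical
    induction s using Finset.cons_induction with
    | empty => simp [ENNReal.zero_rpow_of_pos hq0]
    | cons a s ha ih =>
      rw [Finset.sum_cons, Finset.sum_cons]
      exact (ENNReal.rpow_add_le_add_rpow _ _ hq0.le hq1).trans (add_le_add_right ih _)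
  rw [ENNReal.tsum_eq_iSup_sum, Monotone.map_iSup_of_continuousAt
    ENNReal.continuous_rpow_const.continuousAt (ENNReal.monotone_rpow_of_nonneg hq0.le)
    (ENNReal.zero_rpow_of_pos hq0)]
  exact iSup_le fun s => (h_sum s).trans (ENNReal.sum_le_tsum s)

theorem essSup_comp_restrict_le_of_mapsTo {α β γ : Type*} [MeasurableSpace α] [MeasurableSpace β]
    [CompleteLattice γ] {μ : Measure α} {ν : Measure β} {f : α → β}
    (hf : Measure.QuasiMeasurePreserving f μ ν) {s : Set α} {t : Set β} (hst : Set.MapsTo f s t)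
    (g : β → γ) :
    essSup (g ∘ f) (μ.restrict s) ≤ essSup g (ν.restrict t) := by
  have hmap : (μ.restrict s).map f ≪ ν.restrict t := by
    refine Measure.AbsolutelyContinuous.mk fun A hA hA0 => ?_
    rw [Measure.restrict_apply hA] at hA0
    rw [Measure.map_apply hf.measurable hA, Measure.restrict_apply (hf.measurable hA)]
    exact measure_mono_null (fun x hx => (⟨hx.1, hst hx.2⟩ : f x ∈ A ∩ t)) (hf.preimage_null hA0)
  exact (essSup_comp_le_essSup_map_measure hf.measurable.aemeasurable).trans
    (essSup_mono_measure hmap)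

theorem quasiMeasurePreserving_sub_smul (ε : ℝ) :
    Measure.QuasiMeasurePreserving
      (fun p : (Fin d → ℝ) × (Fin d → ℝ) × (Fin d → ℝ) => (p.1, p.2.1 - ε • p.2.2))
      volume volume := by
  have h_shift : Measure.QuasiMeasurePreserving
      (fun p : (Fin d → ℝ) × (Fin d → ℝ) => p.1 - ε • p.2) volume volume :=
    QuasiMeasurePreserving.prod_of_left (by fun_prop) (ae_of_all _ fun η =>
      (measurePreserving_sub_right volume (ε • η)).quasiMeasurePreserving)
  exact QuasiMeasurePreserving.prodMap (Measure.QuasiMeasurePreserving.id volume) h_shift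

theorem inQ2_sub_smul {ε : ℝ} (hε0 : 0 ≤ ε) (hε1 : ε ≤ 1) {ι κ : Fin d → ℤ}
    {ξ η : Fin d → ℝ} (hξ : inQ d ι ξ) (hη : inQ d κ η) :
    inQ2 d (ι - epsFloor d ε κ) (ξ - ε • η) := by
  intro i
  have h_lo : ε * (κ i : ℝ) ≤ ε * η i := mul_le_mul_of_nonneg_left (hη i).1 hε0
  have h_hi : ε * η i ≤ ε * (κ i : ℝ) + ε := by nlinarith [(hη i).2]
  have h_floor_le := Int.floor_le (ε * (κ i : ℝ))
  have h_lt_floor := Int.lt_floor_add_one (ε * (κ i : ℝ))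
  simp only [Pi.sub_apply, Pi.smul_apply, smul_eq_mul, epsFloor, Int.cast_sub]
  constructor <;> linarith [(hξ i).1, (hξ i).2]

theorem essSup_cube_le (ε : ℝ) (hε0 : 0 ≤ ε) (hε1 : ε ≤ 1)
    (F : (Fin d → ℝ) × (Fin d → ℝ) → ℂ) (ψ : (Fin d → ℝ) → ℂ) (j ι κ : Fin d → ℤ) :
    essSup
      (fun p : (Fin d → ℝ) × (Fin d → ℝ) × (Fin d → ℝ) =>
        ((‖F (p.1, p.2.1 - ε • p.2.2)‖₊ : ℝ≥0∞) * (‖ψ p.2.2‖₊ : ℝ≥0∞)))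
      (volume.restrict {p | inQ d j p.1 ∧ inQ d ι p.2.1 ∧ inQ d κ p.2.2})
    ≤ essSup (fun p : (Fin d → ℝ) × (Fin d → ℝ) => (‖F p‖₊ : ℝ≥0∞))
        (volume.restrict {p | inQ2 d (ι - epsFloor d ε κ) p.2})
      * essSup (fun η => (‖ψ η‖₊ : ℝ≥0∞)) (volume.restrict {η | inQ d κ η}) := by
  have hπ : Measure.QuasiMeasurePreserving
      (fun p : (Fin d → ℝ) × (Fin d → ℝ) × (Fin d → ℝ) => p.2.2) volume volume :=
    Measure.quasiMeasurePreserving_snd.comp Measure.quasiMeasurePreserving_snd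
  refine (ENNReal.essSup_mul_le _ _).trans (mul_le_mul' ?_ ?_)
  · exact essSup_comp_restrict_le_of_mapsTo (quasiMeasurePreserving_sub_smul d ε)
      (fun p hp => inQ2_sub_smul d hε0 hε1 hp.2.1 hp.2.2) (fun p => (‖F p‖₊ : ℝ≥0∞))
  · exact essSup_comp_restrict_le_of_mapsTo hπ (fun p hp => hp.2.2) (fun η => (‖ψ η‖₊ : ℝ≥0∞))

/-- The discretized sup-estimate (Lemma on sup estimates): for `0 < q ≤ 1`,
`ε ∈ [0,1]` and subsets `Ω₁, Ω₂ ⊆ ℤ^d`,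
the left-hand side involving `ess sup` over cubes of `|F(x, ξ−εη) ψ(η)|` is bounded by
the right-hand side involving `‖F‖_{L^∞(ℝ^d × Q₂(ι−⌊εκ⌋))}` and `‖ψ‖_{L^∞(Q(κ))}`. -/
theorem sup_estimates (q ε : ℝ) (hq0 : 0 < q) (hq1 : q ≤ 1)
    (hε0 : 0 ≤ ε) (hε1 : ε ≤ 1)
    (F : (Fin d → ℝ) × (Fin d → ℝ) → ℂ) (ψ : (Fin d → ℝ) → ℂ)
    (Ω₁ Ω₂ : Set (Fin d → ℤ)) :
    (∑' ι : Ω₁, ⨆ j : Fin d → ℤ,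
        (∑' κ : Ω₂,
          essSup
            (fun p : (Fin d → ℝ) × (Fin d → ℝ) × (Fin d → ℝ) =>
              ((‖F (p.1, p.2.1 - ε • p.2.2)‖₊ : ℝ≥0∞) * (‖ψ p.2.2‖₊ : ℝ≥0∞)))
            (volume.restrict
              {p | inQ d j p.1 ∧ inQ d (ι : Fin d → ℤ) p.2.1 ∧ inQ d (κ : Fin d → ℤ) p.2.2}))
          ^ q)
      ≤
    ∑' κ : Ω₂,
      (∑' ι : Ω₁,
          (essSup (fun p : (Fin d → ℝ) × (Fin d → ℝ) => (‖F p‖₊ : ℝ≥0∞))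
            (volume.restrict
              {p | inQ2 d ((ι : Fin d → ℤ) - epsFloor d ε (κ : Fin d → ℤ)) p.2})) ^ q)
        * (essSup (fun η => (‖ψ η‖₊ : ℝ≥0∞))
            (volume.restrict {η | inQ d (κ : Fin d → ℤ) η})) ^ q := by
  calc _ ≤ ∑' ι : Ω₁, ∑' κ : Ω₂,
        (essSup (fun p : (Fin d → ℝ) × (Fin d → ℝ) => (‖F p‖₊ : ℝ≥0∞))
            (volume.restrict
              {p | inQ2 d ((ι : Fin d → ℤ) - epsFloor d ε (κ : Fin d → ℤ)) p.2})
          * essSup (fun η => (‖ψ η‖₊ : ℝ≥0∞))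
            (volume.restrict {η | inQ d (κ : Fin d → ℤ) η})) ^ q :=
        ENNReal.tsum_le_tsum fun ι : Ω₁ => iSup_le fun j =>
          (ENNReal.rpow_le_rpow (ENNReal.tsum_le_tsum fun κ : Ω₂ =>
            essSup_cube_le d ε hε0 hε1 F ψ j ι κ) hq0.le).trans
          (rpow_tsum_le_tsum_rpow _ hq0 hq1)
    _ = _ := by
      rw [ENNReal.tsum_comm]
      simp_rw [ENNReal.mul_rpow_of_nonneg _ _ hq0.le, ENNReal.tsum_mul_right]

end Stmt9
end

section
/- Let q₁, q₂, q₀ ∈ (0,∞] with 1/q₁ + 1/q₂ = 1/q₀, and F₁, F₂ : ℝ^d × ℝ^d → [0,∞) measurable with ‖F₁‖_{L^{∞,q₁}} < ∞ and ‖F₂‖_{L^{1,q₂}} < ∞, where ‖F‖_{L^{p,q}} = ‖ ξ ↦ ‖F(·,ξ)‖_{L^p} ‖_{L^q}. If moreover (∫ (sup_{|y|≥R} F₁(y,ξ))^{q₁} dξ)^{1/q₁} → 0 as R → ∞, then for G(x,ξ) = ∫ F₁(y,ξ) F₂(x−y,ξ) dy one has (∫ (sup_{|x|≥R} G(x,ξ))^{q₀}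 dξ)^{1/q₀} → 0 as R → ∞, provided additionally (∫ (∫_{|y|≥R} F₂(y,ξ) dy)^{q₂} dξ)^{1/q₂} → 0 as R → ∞. -/
/-! For `‖x‖ ≥ R`, split `∫ F₁(y,ξ) F₂(x-y,ξ) dy` according to whether `‖y‖ ≥ R/2`; otherwise
`‖x - y‖ ≥ R/2`. Hence `G(x,ξ) ≤ u(ξ) ‖F₂(·,ξ)‖₁ + ‖F₁(·,ξ)‖_∞ v(ξ)`, with `u`, `v` the tails
of `F₁` and `F₂` at `R/2`. Hölder in `ξ` (`1/q₁ + 1/q₂ = 1/q₀`) and the quasi-triangle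
inequality of `L^{q₀}` bound the `L^{q₀}` norm of the tail of `G` by
`C (‖u‖_{q₁} ‖F₂‖_{L^{1,q₂}} + ‖F₁‖_{L^{∞,q₁}} ‖v‖_{q₂})`, which tends to `0`.

The tail supremum `u` need not be measurable, and `∫⁻` of such a function is a lower integral,
so the estimate is run on measurable minorants with the same norm. -/

open MeasureTheory Filter Topology
open scoped ENNReal

namespace Stmt13

variable (d : ℕ)

/-- The `L^q`-quasi-norm of an `ℝ≥0∞`-valued function, with the sup-modification
(essential supremum) when `q = ∞`. -/
noncomputable def lqNorm (q : ℝ≥0∞) {α : Type*} [MeasurableSpace α]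
    (g : α → ℝ≥0∞) (μ : Measure α) : ℝ≥0∞ :=
  if q = ∞ then essSup g μ
  else (∫⁻ x, (g x) ^ q.toReal ∂μ) ^ (1 / q.toReal)

/-- The mixed norm `‖F‖_{L^{p,q}}` of a nonnegative `F` on `ℝ^d × ℝ^d`. -/
noncomputable def mixedNorm (p q : ℝ≥0∞)
    (F : EuclideanSpace ℝ (Fin d) → EuclideanSpace ℝ (Fin d) → ℝ≥0∞) : ℝ≥0∞ :=
  lqNorm q (fun ξ => lqNorm p (fun x => F x ξ) volume) volume

theorem lqNorm_eq_eLpNorm {q : ℝ≥0∞} (hq : q ≠ 0) {α : Type*} [MeasurableSpace α]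
    (g : α → ℝ≥0∞) (μ : Measure α) : lqNorm q g μ = eLpNorm g q μ := by
  unfold lqNorm
  split_ifs with h
  · simp [h, eLpNorm_exponent_top, eLpNormEssSup]
  · simp [eLpNorm_eq_lintegral_rpow_enorm_toReal hq h]

section ENNRealValued

open ENNReal (HolderTriple LpAddConst)

variable {α : Type*} [MeasurableSpace α] {μ : Measure α}

theorem eLpNorm_mul_le_mul_eLpNorm {f g : α → ℝ≥0∞} (hf : AEMeasurable f μ)
    (hg : AEMeasurable g μ) {p q r : ℝ≥0∞} [hpqr : HolderTriple p q r] :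
    eLpNorm (f * g) r μ ≤ eLpNorm f p μ * eLpNorm g q μ := by
  have hinv := hpqr.one_div_eq
  obtain rfl | rfl | hp := ENNReal.trichotomy p
  · simp_all
  · obtain rfl : r = q := by simpa using hinv
    refine eLpNorm_le_mul_eLpNorm_of_ae_le_mul'' r hg.aestronglyMeasurable ?_
    filter_upwards [ENNReal.ae_le_essSup f] with x hx
    simpa [eLpNorm_exponent_top, eLpNormEssSup] using mul_le_mul_left hx (g x)
  obtain rfl | rfl | hq := ENNReal.trichotomy q
  · simp_all
  · obtain rfl : r = p := by simpa using hinv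
    rw [mul_comm f, mul_comm (eLpNorm f r μ)]
    refine eLpNorm_le_mul_eLpNorm_of_ae_le_mul'' r hf.aestronglyMeasurable ?_
    filter_upwards [ENNReal.ae_le_essSup g] with x hx
    simpa [eLpNorm_exponent_top, eLpNormEssSup] using mul_le_mul_left hx (f x)
  obtain ⟨hp₀, hp_top⟩ := ENNReal.toReal_pos_iff.mp hp
  obtain ⟨hq₀, hq_top⟩ := ENNReal.toReal_pos_iff.mp hq
  have hinv_real : 1 / r.toReal = 1 / p.toReal + 1 / q.toReal := by
    have := congr(ENNReal.toReal $(hinv))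
    rw [ENNReal.toReal_add (by simpa using hp₀.ne') (by simpa using hq₀.ne')] at this
    simpa
  have hr : 0 < r.toReal := one_div_pos.mp <| by rw [hinv_real]; positivity
  obtain ⟨hr₀, hr_top⟩ := ENNReal.toReal_pos_iff.mp hr
  have hrp : r.toReal < p.toReal := lt_of_one_div_lt_one_div hp <|
    hinv_real ▸ lt_add_of_pos_right _ (by positivity)
  simp only [eLpNorm_eq_lintegral_rpow_enorm_toReal hp₀.ne' hp_top.ne,
    eLpNorm_eq_lintegral_rpow_enorm_toReal hq₀.ne' hq_top.ne,
    eLpNorm_eq_lintegral_rpow_enorm_toReal hr₀.ne' hr_top.ne, enorm_eq_self]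
  exact ENNReal.lintegral_Lp_mul_le_Lq_mul_Lr hr hrp hinv_real μ hf hg

theorem exists_measurable_le_eLpNorm_eq (f : α → ℝ≥0∞) {p : ℝ≥0∞} (hp : p ≠ ∞) :
    ∃ g : α → ℝ≥0∞, Measurable g ∧ g ≤ f ∧ eLpNorm g p μ = eLpNorm f p μ := by
  rcases eq_or_ne p 0 with rfl | hp₀
  · exact ⟨0, measurable_const, fun _ => zero_le, by simp⟩
  have ha : 0 < p.toReal := ENNReal.toReal_pos hp₀ hp
  obtain ⟨h, hh, hhf, hint⟩ := exists_measurable_le_lintegral_eq μ (fun x => f x ^ p.toReal)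
  refine ⟨fun x => h x ^ p.toReal⁻¹, hh.pow_const _, fun x => ?_, ?_⟩
  · simpa [ENNReal.rpow_inv_le_iff ha] using hhf x
  · simp only [eLpNorm_eq_lintegral_rpow_enorm_toReal hp₀ hp, enorm_eq_self,
      ENNReal.rpow_inv_rpow ha.ne', hint]

theorem ae_ne_top_of_eLpNorm_ne_top {f : α → ℝ≥0∞} (hf : AEMeasurable f μ) {p : ℝ≥0∞}
    (hp : p ≠ 0) (h : eLpNorm f p μ ≠ ∞) : ∀ᵐ x ∂μ, f x ≠ ∞ := by
  rcases eq_or_ne p ∞ with rfl | hp_top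
  · filter_upwards [ENNReal.ae_le_essSup f] with x hx
    simp only [eLpNorm_exponent_top, eLpNormEssSup, enorm_eq_self] at h
    exact ne_top_of_le_ne_top h hx
  have ha : 0 < p.toReal := ENNReal.toReal_pos hp hp_top
  rw [Ne, eLpNorm_eq_lintegral_rpow_enorm_toReal hp hp_top, ENNReal.rpow_eq_top_iff] at h
  filter_upwards [ae_lt_top' (hf.pow_const p.toReal) (by simp_all)] with x hx
  simpa [ENNReal.rpow_lt_top_iff_of_pos ha, lt_top_iff_ne_top] using hx

theorem eLpNorm_le_of_le_mul_add_mul {T u A B v : α → ℝ≥0∞} (hA : AEMeasurable A μ)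
    (hB : AEMeasurable B μ) (hv : AEMeasurable v μ) (hB_ne_top : ∀ᵐ x ∂μ, B x ≠ ∞)
    (hT : ∀ x, T x ≤ u x * B x + A x * v x) {p q r : ℝ≥0∞} [hpqr : HolderTriple p q r] :
    eLpNorm T r μ ≤
      LpAddConst r * (eLpNorm u p μ * eLpNorm B q μ + eLpNorm A p μ * eLpNorm v q μ) := by
  rcases eq_or_ne r ∞ with rfl | hr
  · obtain ⟨rfl, rfl⟩ : p = ∞ ∧ q = ∞ := by simpa [eq_comm (a := (0 : ℝ≥0∞))] using hpqr.inv_eq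
    simp only [eLpNorm_exponent_top, eLpNormEssSup, enorm_eq_self,
      ENNReal.LpAddConst_of_one_le le_top, one_mul]
    calc essSup T μ ≤ essSup (u * B + A * v) μ := essSup_mono_ae (.of_forall hT)
      _ ≤ essSup (u * B) μ + essSup (A * v) μ := ENNReal.essSup_add_le _ _
      _ ≤ _ := add_le_add (ENNReal.essSup_mul_le _ _) (ENNReal.essSup_mul_le _ _)
  -- `T` and `u` need not be measurable: pass to a measurable minorant `T'` of `T` with the same
  -- norm, and to the measurable minorant `(T' - A v) / B` of `u`.
  obtain ⟨T', hT'm, hT'T, hT'norm⟩ := exists_measurable_le_eLpNorm_eq (μ := μ) T hr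
  set u' := (T' - A * v) / B
  have hu'm : AEMeasurable u' μ := (hT'm.aemeasurable.sub (hA.mul hv)).div hB
  have hu'u : eLpNorm u' p μ ≤ eLpNorm u p μ := by
    refine eLpNorm_mono_enorm fun x => ?_
    simp only [enorm_eq_self]
    exact ENNReal.div_le_of_le_mul (tsub_le_iff_right.2 ((hT'T x).trans (hT x)))
  have hT'le : ∀ᵐ x ∂μ, T' x ≤ u' x * B x + A x * v x := by
    filter_upwards [hB_ne_top] with x hx
    rcases eq_or_ne (B x) 0 with h0 | h0
    · have : T' x ≤ A x * v x := by simpa [h0] using (hT'T x).trans (hT x)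
      simpa [h0] using this
    · simp only [u', Pi.div_apply, Pi.sub_apply, Pi.mul_apply, ENNReal.div_mul_cancel h0 hx]
      exact le_tsub_add
  calc eLpNorm T r μ = eLpNorm T' r μ := hT'norm.symm
    _ ≤ eLpNorm (u' * B + A * v) r μ := eLpNorm_mono_enorm_ae (by simpa using hT'le)
    _ ≤ LpAddConst r * (eLpNorm (u' * B) r μ + eLpNorm (A * v) r μ) :=
      eLpNorm_add_le' (hu'm.mul hB).aestronglyMeasurable (hA.mul hv).aestronglyMeasurable r
    _ ≤ LpAddConst r * (eLpNorm u p μ * eLpNorm B q μ + eLpNorm A p μ * eLpNorm v q μ) := by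
      gcongr
      · exact (eLpNorm_mul_le_mul_eLpNorm hu'm hB).trans (by gcongr)
      · exact eLpNorm_mul_le_mul_eLpNorm hA hv

theorem tendsto_eLpNorm_of_le_mul_add_mul {ι : Type*} {l : Filter ι} {T u v : ι → α → ℝ≥0∞}
    {A B : α → ℝ≥0∞} (hA : AEMeasurable A μ) (hB : AEMeasurable B μ)
    (hv : ∀ i, AEMeasurable (v i) μ) (hB_ne_top : ∀ᵐ x ∂μ, B x ≠ ∞) {p q r : ℝ≥0∞}
    [HolderTriple p q r] (hA_norm : eLpNorm A p μ ≠ ∞) (hB_norm : eLpNorm B q μ ≠ ∞)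
    (hu_tail : Tendsto (fun i => eLpNorm (u i) p μ) l (𝓝 0))
    (hv_tail : Tendsto (fun i => eLpNorm (v i) q μ) l (𝓝 0))
    (hT : ∀ i x, T i x ≤ u i x * B x + A x * v i x) :
    Tendsto (fun i => eLpNorm (T i) r μ) l (𝓝 0) := by
  have hbound : Tendsto (fun i => LpAddConst r *
      (eLpNorm (u i) p μ * eLpNorm B q μ + eLpNorm A p μ * eLpNorm (v i) q μ)) l (𝓝 0) := by
    simpa using ENNReal.Tendsto.const_mul
      ((ENNReal.Tendsto.mul_const hu_tail (.inr hB_norm)).add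
        (ENNReal.Tendsto.const_mul hv_tail (.inr hA_norm))) (.inr (ENNReal.LpAddConst_lt_top r).ne)
  exact tendsto_of_tendsto_of_tendsto_of_le_of_le tendsto_const_nhds hbound (fun _ => zero_le)
    fun i => eLpNorm_le_of_le_mul_add_mul hA hB (hv i) hB_ne_top (hT i)

end ENNRealValued

theorem _root_.Measurable.essSup_prod_left {α β : Type*} [MeasurableSpace α] [MeasurableSpace β]
    {μ : Measure α} [SFinite μ] {f : α × β → ℝ≥0∞} (hf : Measurable f) :
    Measurable fun b => essSup (fun a => f (a, b)) μ := by
  refine measurable_of_Iic fun c => ?_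
  have hs : MeasurableSet {p : α × β | c < f p} := measurableSet_lt measurable_const hf
  convert (measurable_measure_prodMk_right (μ := μ) hs) (measurableSet_singleton 0) using 1
  ext b
  have hnull : μ {a | c < f (a, b)} = 0 ↔ ∀ᵐ a ∂μ, f (a, b) ≤ c := by simp [ae_iff]
  change essSup _ μ ≤ c ↔ μ {a | c < f (a, b)} = 0
  rw [hnull]
  exact ⟨fun h => (ENNReal.ae_le_essSup _).mono fun a ha => ha.trans h, essSup_le_of_ae_le c⟩

theorem iSup_lintegral_mul_sub_le {E : Type*} [NormedAddCommGroup E] [MeasurableSpace E]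
    [BorelSpace E] {μ : Measure E} [μ.IsAddLeftInvariant] [μ.IsNegInvariant]
    (f : E → ℝ≥0∞) {g : E → ℝ≥0∞} (hg : Measurable g) (R : ℝ) :
    ⨆ x ∈ {x : E | R ≤ ‖x‖}, ∫⁻ y, f y * g (x - y) ∂μ ≤
      (⨆ y ∈ {y : E | R / 2 ≤ ‖y‖}, f y) * ∫⁻ y, g y ∂μ +
        essSup f μ * ∫⁻ y in {y : E | R / 2 ≤ ‖y‖}, g y ∂μ := by
  set S := {y : E | R / 2 ≤ ‖y‖}
  have hS : MeasurableSet S := measurableSet_le measurable_const measurable_norm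
  refine iSup₂_le fun x hx => ?_
  have hgx : Measurable fun y => g (x - y) := hg.comp (measurable_id.const_sub x)
  have hgSx : Measurable fun y => S.indicator g (x - y) :=
    (hg.indicator hS).comp (measurable_id.const_sub x)
  have hpoint : ∀ᵐ y ∂μ, f y * g (x - y) ≤
      (⨆ y ∈ S, f y) * g (x - y) + essSup f μ * S.indicator g (x - y) := by
    filter_upwards [ENNReal.ae_le_essSup f] with y hy
    by_cases hyS : y ∈ S
    · exact le_add_right (mul_le_mul_left (le_iSup₂ (f := fun y _ => f y) y hyS) _)
    · have hxy : x - y ∈ S := by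
        have : R ≤ ‖x‖ := hx
        have : ‖y‖ < R / 2 := not_le.1 hyS
        show R / 2 ≤ ‖x - y‖
        linarith [norm_sub_norm_le x y]
      rw [Set.indicator_of_mem hxy]
      exact le_add_left (mul_le_mul_left hy _)
  calc ∫⁻ y, f y * g (x - y) ∂μ
      ≤ ∫⁻ y, (⨆ y ∈ S, f y) * g (x - y) + essSup f μ * S.indicator g (x - y) ∂μ :=
        lintegral_mono_ae hpoint
    _ = _ := by
      rw [lintegral_add_left (hgx.const_mul _), lintegral_const_mul _ hgx,
        lintegral_const_mul _ hgSx,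
        lintegral_sub_left_eq_self g x, lintegral_sub_left_eq_self (S.indicator g) x,
        lintegral_indicator hS]

theorem conv_tail_vanishes (q₀ q₁ q₂ : ℝ≥0∞)
    (h₀ : 0 < q₀)
    (hq : q₁⁻¹ + q₂⁻¹ = q₀⁻¹)
    (F₁ F₂ : EuclideanSpace ℝ (Fin d) → EuclideanSpace ℝ (Fin d) → ℝ≥0∞)
    (hF₁meas : Measurable (fun p : EuclideanSpace ℝ (Fin d) × EuclideanSpace ℝ (Fin d) => F₁ p.1 p.2))
    (hF₂meas : Measurable (fun p : EuclideanSpace ℝ (Fin d) × EuclideanSpace ℝ (Fin d) => F₂ p.1 p.2))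
    (hF₁ : mixedNorm d ∞ q₁ F₁ < ∞)
    (hF₂ : mixedNorm d 1 q₂ F₂ < ∞)
    (hF₁tail : Tendsto (fun R : ℝ =>
        lqNorm q₁ (fun ξ => ⨆ y ∈ {y : EuclideanSpace ℝ (Fin d) | R ≤ ‖y‖}, F₁ y ξ) volume)
        atTop (𝓝 0))
    (hF₂tail : Tendsto (fun R : ℝ =>
        lqNorm q₂ (fun ξ => ∫⁻ y in {y : EuclideanSpace ℝ (Fin d) | R ≤ ‖y‖}, F₂ y ξ) volume)
        atTop (𝓝 0)) :
    Tendsto (fun R : ℝ =>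
        lqNorm q₀ (fun ξ => ⨆ x ∈ {x : EuclideanSpace ℝ (Fin d) | R ≤ ‖x‖},
            ∫⁻ y, F₁ y ξ * F₂ (x - y) ξ) volume)
      atTop (𝓝 0) := by
  have : ENNReal.HolderTriple q₁ q₂ q₀ := ⟨hq⟩
  have hq₁ : q₁ ≠ 0 := fun h => h₀.ne' (by simpa [h] using hq.symm)
  have hq₂ : q₂ ≠ 0 := fun h => h₀.ne' (by simpa [h] using hq.symm)
  have hF₂swap : Measurable fun p : EuclideanSpace ℝ (Fin d) × EuclideanSpace ℝ (Fin d) =>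
      F₂ p.2 p.1 := hF₂meas.comp measurable_swap
  have hA : Measurable fun ξ => essSup (fun y => F₁ y ξ) volume := hF₁meas.essSup_prod_left
  have hB : Measurable fun ξ => ∫⁻ y, F₂ y ξ := hF₂swap.lintegral_prod_right'
  simp only [mixedNorm, lqNorm_eq_eLpNorm hq₁, lqNorm_eq_eLpNorm hq₂,
    lqNorm_eq_eLpNorm h₀.ne', lqNorm_eq_eLpNorm one_ne_zero, lqNorm_eq_eLpNorm ENNReal.top_ne_zero,
    eLpNorm_exponent_top, eLpNormEssSup, eLpNorm_one_eq_lintegral_enorm, enorm_eq_self]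
    at hF₁ hF₂ hF₁tail hF₂tail ⊢
  have hhalf : Tendsto (fun R : ℝ => R / 2) atTop atTop := tendsto_id.atTop_div_const two_pos
  exact tendsto_eLpNorm_of_le_mul_add_mul hA.aemeasurable hB.aemeasurable
    (fun R => (hF₂swap.lintegral_prod_right' (ν := volume.restrict _)).aemeasurable)
    (ae_ne_top_of_eLpNorm_ne_top hB.aemeasurable hq₂ hF₂.ne) hF₁.ne hF₂.ne
    (hF₁tail.comp hhalf) (hF₂tail.comp hhalf)
    fun R ξ => iSup_lintegral_mul_sub_le _ (hF₂meas.comp (measurable_id.prodMk measurable_const)) R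

end Stmt13
end
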